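/- arXiv:0803.1119 — 6 statements merged into one kernel-verified Lean document; each statement's English description precedes it below -/
import Mathlib

section
/- For a semigroup S with zero 0 and a 0-module A over S, the coboundary operator satisfies ∂^(n+1) ∘ ∂^n = 0. Here a 0-cochain of dimension n is a function f defined on tuples (x_1,...,x_n) of elements of S with x_1⋯x_n ≠ 0, taking values in A, and ∂^n f(x_1,...,x_{n+1}) = x_1·f(x_2,...,x_{n+1}) + Σ_{i=1}^n (-1)^i f(x_1,...,x_i x_{i+1},...,x_{n+1}) + (-1)^{n+1} f(x_1,...,x_n), defined on tuples with x_1⋯x_{n+1} ≠ 0. -/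
/-- The product `x₁ ⋯ xₙ` of a nonempty tuple in a semigroup with zero. -/
def sprod {S : Type*} [SemigroupWithZero S] : ∀ {n : ℕ}, (Fin (n + 1) → S) → S
  | 0, x => x 0
  | _ + 1, x => x 0 * sprod (Fin.tail x)

/-- The coboundary operator of 0-cohomology, written with a total action
`act : S → A → A` and total cochains (values on tuples with zero product are
irrelevant). -/
def coboundary {S : Type*} [SemigroupWithZero S] {A : Type*} [AddCommGroup A]
    (act : S → A → A) {n : ℕ} (f : (Fin n → S) → A) (x : Fin (n + 1) → S) : A :=
  act (x 0) (f (Fin.tail x)) +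
    (∑ i : Fin n, ((-1 : ℤ) ^ ((i : ℕ) + 1)) • f (Fin.contractNth i.castSucc (· * ·) x)) +
    ((-1 : ℤ) ^ (n + 1)) • f (Fin.init x)


open Fin in
lemma contract_contract {α : Type*} {m : ℕ} (op : α → α → α)
    (hop : ∀ a b c, op (op a b) c = op a (op b c))
    (x : Fin (m + 2) → α) (j : Fin (m + 2)) (k : Fin (m + 1)) (h : (j : ℕ) ≤ k) :
    Fin.contractNth k op (Fin.contractNth j op x)
      = Fin.contractNth ⟨j, Nat.lt_of_le_of_lt h k.isLt⟩ op
          (Fin.contractNth k.succ op x) := by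
  have hjv : ((⟨(j:ℕ), Nat.lt_of_le_of_lt h k.isLt⟩ : Fin (m+1)) : ℕ) = (j:ℕ) := rfl
  funext i
  rcases lt_trichotomy (i : ℕ) (j : ℕ) with hij | hij | hij
  · rw [contractNth_apply_of_lt k op _ i (by omega),
        contractNth_apply_of_lt _ op _ i (by rw [hjv]; omega),
        contractNth_apply_of_lt j op x i.castSucc (by simp only [Fin.coe_castSucc]; omega),
        contractNth_apply_of_lt k.succ op x i.castSucc (by simp only [Fin.coe_castSucc, Fin.val_succ]; omega)]
  · rcases eq_or_lt_of_le h with hjk | hjk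
    · -- i = j = k
      rw [contractNth_apply_of_eq k op _ i (by omega),
          contractNth_apply_of_eq _ op _ i (by rw [hjv]; omega),
          contractNth_apply_of_eq j op x i.castSucc (by simp only [Fin.coe_castSucc]; omega),
          contractNth_apply_of_gt j op x i.succ (by simp only [Fin.val_succ]; omega),
          contractNth_apply_of_lt k.succ op x i.castSucc (by simp only [Fin.coe_castSucc, Fin.val_succ]; omega),
          contractNth_apply_of_eq k.succ op x i.succ (by simp only [Fin.val_succ]; omega),
          hop, Fin.succ_castSucc]
    · -- i = j < k
      rw [contractNth_apply_of_lt k op _ i (by omega),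
          contractNth_apply_of_eq _ op _ i (by rw [hjv]; omega),
          contractNth_apply_of_eq j op x i.castSucc (by simp only [Fin.coe_castSucc]; omega),
          contractNth_apply_of_lt k.succ op x i.castSucc (by simp only [Fin.coe_castSucc, Fin.val_succ]; omega),
          contractNth_apply_of_lt k.succ op x i.succ (by simp only [Fin.val_succ]; omega),
          Fin.succ_castSucc]
  · rcases lt_trichotomy (i : ℕ) (k : ℕ) with hik | hik | hik
    · -- j < i < k
      rw [contractNth_apply_of_lt k op _ i hik,
          contractNth_apply_of_gt _ op _ i (by rw [hjv]; omega),
          contractNth_apply_of_gt j op x i.castSucc (by simp only [Fin.coe_castSucc]; omega),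
          contractNth_apply_of_lt k.succ op x i.succ (by simp only [Fin.val_succ]; omega),
          Fin.succ_castSucc]
    · -- j < i = k
      rw [contractNth_apply_of_eq k op _ i hik,
          contractNth_apply_of_gt _ op _ i (by rw [hjv]; omega),
          contractNth_apply_of_gt j op x i.castSucc (by simp only [Fin.coe_castSucc]; omega),
          contractNth_apply_of_gt j op x i.succ (by simp only [Fin.val_succ]; omega),
          contractNth_apply_of_eq k.succ op x i.succ (by simp only [Fin.val_succ]; omega),
          Fin.succ_castSucc]
    · -- k < i
      rw [contractNth_apply_of_gt k op _ i hik,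
          contractNth_apply_of_gt _ op _ i (by rw [hjv]; omega),
          contractNth_apply_of_gt j op x i.succ (by simp only [Fin.val_succ]; omega),
          contractNth_apply_of_gt k.succ op x i.succ (by simp only [Fin.val_succ]; omega)]

lemma double_sum_zero {α : Type*} {A : Type*} [AddCommGroup A] {m : ℕ}
    (op : α → α → α) (hop : ∀ a b c, op (op a b) c = op a (op b c))
    (x : Fin (m + 2) → α) (f : (Fin m → α) → A) :
    ∑ j : Fin (m + 2), ∑ k : Fin (m + 1),
      ((-1 : ℤ) ^ ((j : ℕ) + (k : ℕ))) • f (Fin.contractNth k op (Fin.contractNth j op x)) = 0 := by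
  rw [← Fintype.sum_prod_type']
  set T : Fin (m + 2) × Fin (m + 1) → A := fun p =>
    ((-1 : ℤ) ^ ((p.1 : ℕ) + (p.2 : ℕ))) • f (Fin.contractNth p.2 op (Fin.contractNth p.1 op x))
    with hT
  show ∑ p : Fin (m + 2) × Fin (m + 1), T p = 0
  have key : ∀ (j : Fin (m + 2)) (k : Fin (m + 1)) (h : (j : ℕ) ≤ (k : ℕ)),
      T (j, k) + T (k.succ, ⟨j, Nat.lt_of_le_of_lt h k.isLt⟩) = 0 := by
    intro j k h
    simp only [hT]
    rw [contract_contract op hop x j k h, ← add_smul]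
    convert zero_smul ℤ _
    have h2 : ((k.succ : Fin (m+2)) : ℕ) + ((⟨(j:ℕ), Nat.lt_of_le_of_lt h k.isLt⟩ : Fin (m+1)) : ℕ)
        = ((j:ℕ) + (k:ℕ)) + 1 := by simp only [Fin.val_succ]; show (k:ℕ) + 1 + (j:ℕ) = _; omega
    rw [h2, pow_succ]
    ring
  apply Finset.sum_ninvolution
    (g := fun p => if h : (p.1 : ℕ) ≤ (p.2 : ℕ)
      then ((p.2.succ, ⟨p.1, Nat.lt_of_le_of_lt h p.2.isLt⟩) : Fin (m + 2) × Fin (m + 1))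
      else ((⟨p.2, Nat.lt_of_lt_of_le p.2.isLt (by omega)⟩,
            ⟨(p.1 : ℕ) - 1, by have := p.1.isLt; omega⟩) : Fin (m + 2) × Fin (m + 1)))
  · intro p
    by_cases h : (p.1 : ℕ) ≤ (p.2 : ℕ)
    · rw [dif_pos h]
      exact key p.1 p.2 h
    · rw [dif_neg h]
      push_neg at h
      have h1 : (p.1 : ℕ) ≠ 0 := by omega
      have hle : ((⟨(p.2:ℕ), Nat.lt_of_lt_of_le p.2.isLt (by omega)⟩ : Fin (m+2)) : ℕ)
          ≤ (((⟨(p.1:ℕ) - 1, by have := p.1.isLt; omega⟩ : Fin (m+1))) : ℕ) := by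
        show (p.2 : ℕ) ≤ (p.1 : ℕ) - 1; omega
      have := key ⟨p.2, Nat.lt_of_lt_of_le p.2.isLt (by omega)⟩ ⟨(p.1:ℕ)-1, by have := p.1.isLt; omega⟩ hle
      rw [add_comm] at this
      convert this using 3
      refine Prod.ext (Fin.ext ?_) (Fin.ext ?_)
      · show (p.1 : ℕ) = (p.1 : ℕ) - 1 + 1
        omega
      · rfl
  · intro p _
    by_cases h : (p.1 : ℕ) ≤ (p.2 : ℕ)
    · rw [dif_pos h]
      intro hp
      have := congrArg (fun q => (q.1 : ℕ)) hp
      simp only [Fin.val_succ] at this; omega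
    · rw [dif_neg h]
      push_neg at h
      intro hp
      have := congrArg (fun q => (q.1 : ℕ)) hp
      simp only at this
      omega
  · intro p; exact Finset.mem_univ _
  · intro p
    by_cases h : (p.1 : ℕ) ≤ (p.2 : ℕ)
    · rw [dif_pos h, dif_neg (by show ¬ ((p.2:ℕ)+1 ≤ (p.1:ℕ)); omega)]
      ext
      · show ((p.1 : ℕ) : ℕ) = _; simp
      · show (p.2 : ℕ) + 1 - 1 = (p.2 : ℕ); omega
    · rw [dif_neg h, dif_pos (by push_neg at h; show (p.2:ℕ) ≤ (p.1:ℕ) - 1; omega)]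
      push_neg at h
      ext
      · show (p.1 : ℕ) - 1 + 1 = (p.1 : ℕ); omega
      · show (p.2 : ℕ) = (p.2 : ℕ); rfl


open Fin in
lemma contractNth_last' {α : Type*} {m : ℕ} (op : α → α → α) (x : Fin (m + 1) → α) :
    Fin.contractNth (Fin.last m) op x = Fin.init x := by
  funext i
  rw [Fin.contractNth_apply_of_lt _ _ _ _ (by simpa using i.isLt), Fin.init]

open Fin in
lemma tail_contract_zero {α : Type*} {m : ℕ} (op : α → α → α) (x : Fin (m + 2) → α) :
    Fin.tail (Fin.contractNth 0 op x) = Fin.tail (Fin.tail x) := by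
  funext i
  show Fin.contractNth 0 op x i.succ = x i.succ.succ
  rw [Fin.contractNth_apply_of_gt _ _ _ _ (by simp)]

open Fin in
lemma contract_zero_head {α : Type*} {m : ℕ} (op : α → α → α) (x : Fin (m + 2) → α) :
    Fin.contractNth 0 op x 0 = op (x 0) (x 1) := by
  rw [Fin.contractNth_apply_of_eq _ _ _ _ (by simp)]
  congr 1

open Fin in
lemma tail_contract_succ {α : Type*} {m : ℕ} (op : α → α → α) (x : Fin (m + 2) → α)
    (i : Fin (m + 1)) :
    Fin.tail (Fin.contractNth i.succ op x) = Fin.contractNth i op (Fin.tail x) := by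
  funext k
  show Fin.contractNth i.succ op x k.succ = _
  rcases lt_trichotomy (k : ℕ) (i : ℕ) with hk | hk | hk
  · rw [Fin.contractNth_apply_of_lt _ _ _ _ (by simp only [Fin.val_succ]; omega),
        Fin.contractNth_apply_of_lt _ _ _ _ hk]
    show x _ = x _
    rw [Fin.succ_castSucc]
  · rw [Fin.contractNth_apply_of_eq _ _ _ _ (by simp only [Fin.val_succ]; omega),
        Fin.contractNth_apply_of_eq _ _ _ _ hk]
    show op (x _) (x _) = op (x _) (x _)
    rw [Fin.succ_castSucc]
  · rw [Fin.contractNth_apply_of_gt _ _ _ _ (by simp only [Fin.val_succ]; omega),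
        Fin.contractNth_apply_of_gt _ _ _ _ hk]
    rfl

open Fin in
lemma contract_succ_head {α : Type*} {m : ℕ} (op : α → α → α) (x : Fin (m + 2) → α)
    (i : Fin (m + 1)) :
    Fin.contractNth i.succ op x 0 = x 0 := by
  rw [Fin.contractNth_apply_of_lt _ _ _ _ (by simp)]
  congr 1

lemma coboundary_eq {S : Type*} [SemigroupWithZero S] {A : Type*} [AddCommGroup A]
    (act : S → A → A) {n : ℕ} (f : (Fin n → S) → A) (x : Fin (n + 1) → S) :
    coboundary act f x = act (x 0) (f (Fin.tail x)) +
      ∑ j : Fin (n + 1), ((-1 : ℤ) ^ ((j : ℕ) + 1)) • f (Fin.contractNth j (· * ·) x) := by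
  rw [coboundary, Fin.sum_univ_castSucc
    (f := fun j : Fin (n+1) => ((-1 : ℤ) ^ ((j : ℕ) + 1)) • f (Fin.contractNth j (· * ·) x)),
    contractNth_last', add_assoc]
  simp [Fin.coe_castSucc, Fin.val_last]

/-- For a semigroup `S` with zero and a 0-module `A` over `S`
(the action satisfies `s(a+b) = sa + sb` for `s ≠ 0` and `s(ta) = (st)a`
whenever `st ≠ 0`), the coboundary operator satisfies `∂^{n+1} ∘ ∂^n = 0`:
for every `n`-cochain `f` and every `(n+2)`-tuple with nonzero product,
`∂(∂ f)` vanishes. -/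
theorem zeroCohomology_coboundary_coboundary {S : Type*} [SemigroupWithZero S]
    {A : Type*} [AddCommGroup A] (act : S → A → A)
    (hact_add : ∀ s : S, s ≠ 0 → ∀ a b : A, act s (a + b) = act s a + act s b)
    (hact_mul : ∀ s t : S, s * t ≠ 0 → ∀ a : A, act s (act t a) = act (s * t) a)
    (n : ℕ) (f : (Fin n → S) → A) (x : Fin (n + 2) → S) (hx : sprod x ≠ 0) :
    coboundary act (coboundary act f) x = 0 := by
  have ht0 : Fin.tail x 0 = x 1 := by
    show x (Fin.succ 0) = x 1
    rw [Fin.succ_zero_eq_one]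
  have hmul : x 0 * x 1 ≠ 0 := by
    intro hm
    apply hx
    cases n with
    | zero =>
        show x 0 * sprod (Fin.tail x) = 0
        show x 0 * Fin.tail x 0 = 0
        rw [ht0, hm]
    | succ m =>
        show x 0 * sprod (Fin.tail x) = 0
        rw [show sprod (Fin.tail x) = Fin.tail x 0 * sprod (Fin.tail (Fin.tail x)) from rfl,
          ht0, ← mul_assoc, hm, zero_mul]
  have h0 : x 0 ≠ 0 := left_ne_zero_of_mul hmul
  let F : A →+ A := AddMonoidHom.mk' (act (x 0)) (hact_add (x 0) h0)
  simp only [coboundary_eq]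
  rw [ht0]
  have hA : act (x 0) (act (x 1) (f (Fin.tail (Fin.tail x))) +
      ∑ k : Fin (n + 1), ((-1 : ℤ) ^ ((k : ℕ) + 1)) • f (Fin.contractNth k (· * ·) (Fin.tail x)))
      = act (x 0 * x 1) (f (Fin.tail (Fin.tail x))) +
      ∑ k : Fin (n + 1), ((-1 : ℤ) ^ ((k : ℕ) + 1)) •
        act (x 0) (f (Fin.contractNth k (· * ·) (Fin.tail x))) := by
    rw [hact_add _ h0, hact_mul _ _ hmul]
    congr 1
    show F _ = _
    rw [map_sum]
    refine Finset.sum_congr rfl fun k _ => ?_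
    rw [map_zsmul]
    rfl
  rw [hA]
  have hB : ∀ j : Fin (n + 2), ((-1 : ℤ) ^ ((j : ℕ) + 1)) •
        (act (Fin.contractNth j (· * ·) x 0) (f (Fin.tail (Fin.contractNth j (· * ·) x))) +
         ∑ k : Fin (n + 1), ((-1 : ℤ) ^ ((k : ℕ) + 1)) •
            f (Fin.contractNth k (· * ·) (Fin.contractNth j (· * ·) x)))
      = ((-1 : ℤ) ^ ((j : ℕ) + 1)) •
          act (Fin.contractNth j (· * ·) x 0) (f (Fin.tail (Fin.contractNth j (· * ·) x))) +
        ∑ k : Fin (n + 1), ((-1 : ℤ) ^ ((j : ℕ) + (k : ℕ))) •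
            f (Fin.contractNth k (· * ·) (Fin.contractNth j (· * ·) x)) := by
    intro j
    rw [smul_add, Finset.smul_sum]
    congr 1
    refine Finset.sum_congr rfl fun k _ => ?_
    rw [smul_smul]
    congr 1
    rw [← pow_add, show ((j : ℕ) + 1) + ((k : ℕ) + 1) = ((j : ℕ) + (k : ℕ)) + 2 from by omega,
      pow_add]
    norm_num
  rw [Finset.sum_congr rfl fun j _ => hB j, Finset.sum_add_distrib,
    double_sum_zero (· * ·) mul_assoc x f, add_zero,
    Fin.sum_univ_succ (f := fun j : Fin (n + 2) => ((-1 : ℤ) ^ ((j : ℕ) + 1)) •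
      act (Fin.contractNth j (· * ·) x 0) (f (Fin.tail (Fin.contractNth j (· * ·) x))))]
  simp only [contract_zero_head, tail_contract_zero, contract_succ_head, tail_contract_succ,
    Fin.val_succ, Fin.val_zero]
  simp only [show ∀ i : ℕ, ((-1 : ℤ) ^ (i + 1 + 1)) = -((-1 : ℤ) ^ (i + 1)) from
      fun i => by rw [pow_succ]; ring,
    zero_add, pow_one, neg_smul, one_smul, Finset.sum_neg_distrib]
  abel
end

section
/- Let S be a semigroup with zero and let I be a left ideal of S having an identity element e (so e·a = a·e = a for all a ∈ I). Then for every S-module A and every 1-cocycle f : S → A, the restriction of f to I is a 1-cocycle on I, and if the restriction is a coboundary on I then f is determined up to coboundary; in particular the restriction map H^1(S, A) → H^1(I, A) is injective. -/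
/-- Let `S` be a semigroup, `I ⊆ S` a left ideal possessing
an identity element `e`, and `A` an `S`-module (with action `act`).  Then the
restriction to `I` of any 1-cocycle `f : S → A` is a 1-cocycle on `I`, and if
this restriction is a 1-coboundary on `I` then `f` is a 1-coboundary on `S`;
in particular the restriction map `H¹(S, A) → H¹(I, A)` is injective. -/
theorem restriction_H1_injective_of_leftIdeal {S : Type*} [Semigroup S]
    {A : Type*} [AddCommGroup A] (act : S → A → A)
    (hact_add : ∀ (s : S) (a b : A), act s (a + b) = act s a + act s b)
    (hact_mul : ∀ (s t : S) (a : A), act (s * t) a = act s (act t a))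
    (I : Set S) (hI : ∀ s : S, ∀ a ∈ I, s * a ∈ I)
    (e : S) (he : e ∈ I) (heI : ∀ a ∈ I, e * a = a ∧ a * e = a)
    (f : S → A) (hf : ∀ x y : S, f (x * y) = act x (f y) + f x) :
    (∀ x ∈ I, ∀ y ∈ I, f (x * y) = act x (f y) + f x) ∧
      ((∃ a : A, ∀ x ∈ I, f x = act x a - a) →
        ∃ a : A, ∀ x : S, f x = act x a - a) := by
  have hsub : ∀ (s : S) (b c : A), act s (b - c) = act s b - act s c := by
    intro s b c
    have := hact_add s (b - c) c
    rw [sub_add_cancel] at this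
    rw [this]; abel
  refine ⟨fun x _ y _ => hf x y, ?_⟩
  rintro ⟨a, ha⟩
  refine ⟨a, fun s => ?_⟩
  have hse : s * e ∈ I := hI s e he
  have h1 : f (s * e) = act s (f e) + f s := hf s e
  have h2 : f (s * e) = act (s * e) a - a := ha _ hse
  have h3 : f e = act e a - a := ha e he
  have h4 : act (s * e) a = act s (act e a) := hact_mul s e a
  have : act s (act e a - a) + f s = act s (act e a) - a := by
    rw [← h3, ← h1, h2, h4]
  rw [hsub] at this
  have := congrArg (· - (act s (act e a) - act s a)) this
  rw [show act s (act e a) - act s a + f s - (act s (act e a) - act s a) = f s by abel,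
    show act s (act e a) - a - (act s (act e a) - act s a) = act s a - a by abel] at this
  exact this
end

section
/- Let S = {u, v, w, 0} be the commutative semigroup with zero where u² = v² = uv = vu = w and uw = wu = vw = wv = w² = 0. Let A be a nontrivial 0-module over S with trivial action (s·a = a for all s ∈ S∖{0}), and fix a ∈ A with a ≠ 0. Define the 2-cochain f on pairs (x,y) with xy ≠ 0 by f(u,u) = a and f(x,y) = 0 otherwise. Then f is a 2-cocycle (∂²f = 0 on all triples with nonzero product) but f is not a 2-coboundary; hence H²₀(S, A) ≠ 0. -/
/-! Every product of three elements of `S` is `0`, so there are no 2-cocycle conditions to check.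
A coboundary `∂φ` takes the values `2φ(u) - φ(w)`, `φ(u) + φ(v) - φ(w)`, `2φ(v) - φ(w)` at
`(u,u)`, `(u,v)` resp. `(v,u)`, and `(v,v)`, so it satisfies `∂φ(u,u) + ∂φ(v,v) = ∂φ(u,v) + ∂φ(v,u)`;
the cochain `f` violates this since `a + 0 ≠ 0 + 0`. -/

/-- The commutative semigroup `S = {u, v, w, 0}` with
`u² = v² = uv = vu = w` and all other products `0`. -/
inductive S5 : Type
  | u | v | w | z
  deriving DecidableEq, Repr

instance : Fintype S5 where
  elems := {S5.u, S5.v, S5.w, S5.z}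
  complete := by intro x; cases x <;> simp

namespace S5

def mul : S5 → S5 → S5
  | u, u => w
  | u, v => w
  | v, u => w
  | v, v => w
  | _, _ => z

instance : Mul S5 := ⟨mul⟩

instance : Semigroup S5 where
  mul_assoc := by decide

end S5

theorem S5.mul_mul_mul_eq_z (x y t : S5) : x * y * t = S5.z := by
  revert x y t
  decide

section ZeroCohomology

variable {M A : Type*} [Mul M] [AddCommGroup A]

/- 0-cochains with values in a module with trivial action; `o` plays the role of the zero of the
semigroup, and only arguments with product different from `o` are constrained. -/

def IsZeroCocycle (o : M) (f : M → M → A) : Prop :=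
  ∀ x y t : M, x * y * t ≠ o → f y t - f (x * y) t + f x (y * t) - f x y = 0

def IsZeroCoboundary (o : M) (f : M → M → A) : Prop :=
  ∃ φ : M → A, ∀ x y : M, x * y ≠ o → f x y = φ y - φ (x * y) + φ x

theorem isZeroCocycle_of_mul_mul_eq {o : M} (h : ∀ x y t : M, x * y * t = o)
    (f : M → M → A) : IsZeroCocycle o f :=
  fun x y t hxyt => absurd (h x y t) hxyt

theorem IsZeroCoboundary.add_eq_add {o : M} {f : M → M → A} (hf : IsZeroCoboundary o f)
    {x y : M} (hxx : x * x = x * y) (hyy : y * y = y * x) (hxy : x * y ≠ o)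
    (hyx : y * x ≠ o) : f x x + f y y = f x y + f y x := by
  obtain ⟨φ, hφ⟩ := hf
  rw [hφ x x (hxx ▸ hxy), hφ y y (hyy ▸ hyx), hφ x y hxy, hφ y x hyx, hxx, hyy]
  abel

end ZeroCohomology

/-- For the semigroup `S = {u,v,w,0}` above and a nontrivial
0-module `A` with trivial action (`s·a = a` for all nonzero `s`), the 2-cochain
`f` with `f(u,u) = a ≠ 0` and `f = 0` elsewhere is a 2-cocycle but not a
2-coboundary; hence `H²₀(S, A) ≠ 0`. -/
theorem S5_H2_ne_zero {A : Type*} [AddCommGroup A] (a : A) (ha : a ≠ 0)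
    (f : S5 → S5 → A)
    (hf : ∀ x y : S5, f x y = if x = S5.u ∧ y = S5.u then a else 0) :
    (∀ x y t : S5, x * y * t ≠ S5.z →
        f y t - f (x * y) t + f x (y * t) - f x y = 0) ∧
      ¬ ∃ φ : S5 → A, ∀ x y : S5, x * y ≠ S5.z →
          f x y = φ y - φ (x * y) + φ x := by
  refine ⟨isZeroCocycle_of_mul_mul_eq S5.mul_mul_mul_eq_z f, fun hcob => ha ?_⟩
  have key := IsZeroCoboundary.add_eq_add hcob (x := S5.u) (y := S5.v)
    rfl rfl S5.noConfusion S5.noConfusion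
  simpa [hf] using key
end

section
/- Let S be a monoid and K a field, and let ε : S × S → K be a mapping taking only values 0 and 1 that is a factor set (satisfies the cohomological equation and ε(x,y) = 0 ⇔ ε(1,xy) = 0). Define I_ε = {s ∈ S : ε(1,s) = 0}. Then I_ε is a two-sided ideal of S, and ε(x,y) = 0 if and only if xy ∈ I_ε. Moreover, for two such idempotent factor sets ε₁, ε₂, the pointwise product ε₁ε₂ is the idempotent factor set corresponding to the ideal I_{ε₁} ∪ I_{ε₂}. -/
/-- A factor set on a monoid `S` over a field `K`. -/
def IsFactorSet {S : Type*} [Monoid S] {K : Type*} [Field K] (ρ : S → S → K) : Prop :=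
  (∀ x y z : S, ρ x y * ρ (x * y) z = ρ x (y * z) * ρ y z) ∧
    (∀ x y : S, ρ x y = 0 ↔ ρ 1 (x * y) = 0)

/-- The ideal associated to an idempotent factor set. -/
def idealOf {S : Type*} [Monoid S] {K : Type*} [Field K] (ε : S → S → K) : Set S :=
  {s : S | ε 1 s = 0}

lemma ideal_aux_right {S : Type*} [Monoid S] {K : Type*} [Field K] (ε : S → S → K)
    (h : IsFactorSet ε) {s : S} (hs : ε 1 s = 0) (t : S) : ε 1 (s * t) = 0 := by
  obtain ⟨hc, hz⟩ := h
  have := hc 1 s t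
  rw [one_mul, hs, zero_mul] at this
  by_contra h0
  rcases mul_eq_zero.mp this.symm with h' | h'
  · exact h0 h'
  · exact h0 ((hz s t).mp h')

lemma ideal_aux_left {S : Type*} [Monoid S] {K : Type*} [Field K] (ε : S → S → K)
    (h : IsFactorSet ε) {s : S} (hs : ε 1 s = 0) (t : S) : ε 1 (t * s) = 0 := by
  obtain ⟨hc, hz⟩ := h
  by_cases ht : ε 1 t = 0
  · exact ideal_aux_right ε ⟨hc, hz⟩ ht s
  · have h10 : ε t 1 ≠ 0 := fun hh => ht (by simpa using (hz t 1).mp hh)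
    have := hc t 1 s
    rw [mul_one, one_mul, hs, mul_zero] at this
    rcases mul_eq_zero.mp this with h' | h'
    · exact absurd h' h10
    · exact (hz t s).mp h'

/-- **Lemma 1 of the paper.** For an idempotent (i.e.
`{0,1}`-valued) factor set `ε` on a monoid `S` over a field `K`, the set
`I_ε = {s | ε(1,s) = 0}` is a two-sided ideal of `S`, and `ε(x,y) = 0` iff
`xy ∈ I_ε`.  Moreover, the pointwise product of two idempotent factor sets is
an idempotent factor set whose ideal is `I_{ε₁} ∪ I_{ε₂}`. -/
theorem idempotent_factorSet_ideal {S : Type*} [Monoid S] {K : Type*} [Field K]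
    (ε₁ ε₂ : S → S → K)
    (h1 : IsFactorSet ε₁) (h2 : IsFactorSet ε₂)
    (hv1 : ∀ x y : S, ε₁ x y = 0 ∨ ε₁ x y = 1)
    (hv2 : ∀ x y : S, ε₂ x y = 0 ∨ ε₂ x y = 1) :
    (∀ s ∈ idealOf (K := K) ε₁, ∀ t : S, s * t ∈ idealOf (K := K) ε₁ ∧
        t * s ∈ idealOf (K := K) ε₁) ∧
      (∀ x y : S, ε₁ x y = 0 ↔ x * y ∈ idealOf (K := K) ε₁) ∧
      (IsFactorSet (fun x y => ε₁ x y * ε₂ x y) ∧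
        (∀ x y : S, ε₁ x y * ε₂ x y = 0 ∨ ε₁ x y * ε₂ x y = 1) ∧
        idealOf (K := K) (fun x y => ε₁ x y * ε₂ x y) =
          idealOf (K := K) ε₁ ∪ idealOf (K := K) ε₂) := by
  refine ⟨fun s hs t => ⟨ideal_aux_right ε₁ h1 hs t, ideal_aux_left ε₁ h1 hs t⟩,
    fun x y => h1.2 x y, ⟨?_, ?_⟩, fun x y => ?_, ?_⟩
  · intro x y z
    have c1 := h1.1 x y z
    have c2 := h2.1 x y z
    calc ε₁ x y * ε₂ x y * (ε₁ (x * y) z * ε₂ (x * y) z)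
        = (ε₁ x y * ε₁ (x * y) z) * (ε₂ x y * ε₂ (x * y) z) := by ring
      _ = (ε₁ x (y * z) * ε₁ y z) * (ε₂ x (y * z) * ε₂ y z) := by rw [c1, c2]
      _ = ε₁ x (y * z) * ε₂ x (y * z) * (ε₁ y z * ε₂ y z) := by ring
  · intro x y
    simp only [mul_eq_zero]
    rw [h1.2 x y, h2.2 x y]
  · rcases hv1 x y with h | h <;> rcases hv2 x y with h' | h' <;> simp [h, h']
  · ext s
    simp [idealOf, mul_eq_zero]
end

section
/- Let G be a finite Galois group of a field extension K/L. A weak 2-cocycle is a map f : G × G → K satisfying σ(f(τ,ω))·f(σ, τω) = f(σ,τ)·f(στ,ω) and f(1,σ) = f(σ,1) = 1 for all σ,τ,ω ∈ G. Prove: if e : G × G → {0,1} ⊆ K is a weak 2-cocycle taking only values 0 and 1, then the operation x∘y := xy if e(x,y)=1 and x∘y := 0 if e(x,y)=0, extended by x∘0 = 0∘x = 0, makes G ∪ {0} into a monoid (i.e., ∘ is associative with identity 1). -/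
/-! Only the zero pattern of `e` enters `∘`, and `(x ∘ y) ∘ z` vanishes exactly when
`e(x,y) = 0` or `e(xy,z) = 0`, while `x ∘ (y ∘ z)` vanishes exactly when `e(y,z) = 0` or
`e(x,yz) = 0`. Since `σ` acts injectively and `K` has no zero divisors, the two sides of the
cocycle identity `σ(e(τ,ω)) e(σ,τω) = e(σ,τ) e(στ,ω)` vanish under precisely these two
conditions, so they agree. -/

open Classical in
/-- The operation on `G ∪ {0}` determined by an idempotent weak 2-cocycle `e`:
`x ∘ y = xy` if `e(x,y) = 1` and `x ∘ y = 0` otherwise, extended by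
`x ∘ 0 = 0 ∘ x = 0`. -/
noncomputable def modOp {G : Type*} [Group G] {K : Type*} [Field K]
    (e : G → G → K) : WithZero G → WithZero G → WithZero G
  | some x, some y => if e x y = 0 then 0 else (some (x * y))
  | _, _ => 0

theorem cocycle_zero_iff {G R : Type*} [Group G] [Semiring R] [NoZeroDivisors R]
    [DistribMulAction G R] {e : G → G → R}
    (hcoc : ∀ σ τ ω : G, σ • e τ ω * e σ (τ * ω) = e σ τ * e (σ * τ) ω)
    (σ τ ω : G) :
    (e σ τ = 0 ∨ e (σ * τ) ω = 0) ↔ (e τ ω = 0 ∨ e σ (τ * ω) = 0) := by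
  rw [← mul_eq_zero, ← hcoc, mul_eq_zero, smul_eq_zero_iff_eq]

section

open Classical

variable {G K : Type*} [Group G] [Field K] (e : G → G → K)

theorem modOp_coe_coe (x y : G) :
    modOp e (x : WithZero G) y = if e x y = 0 then 0 else ((x * y : G) : WithZero G) :=
  rfl

@[simp]
theorem modOp_zero_left (x : WithZero G) : modOp e 0 x = 0 :=
  rfl

@[simp]
theorem modOp_zero_right (x : WithZero G) : modOp e x 0 = 0 := by
  cases x <;> rfl

theorem modOp_modOp_coe (x y z : G) :
    modOp e (modOp e x y) z =
      if e x y = 0 ∨ e (x * y) z = 0 then 0 else ((x * y * z : G) : WithZero G) := by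
  by_cases hxy : e x y = 0
  · simp [modOp_coe_coe, hxy]
  · rw [modOp_coe_coe e x, if_neg hxy, modOp_coe_coe]
    simp only [hxy, false_or]

theorem modOp_coe_modOp (x y z : G) :
    modOp e x (modOp e y z) =
      if e y z = 0 ∨ e x (y * z) = 0 then 0 else ((x * (y * z) : G) : WithZero G) := by
  by_cases hyz : e y z = 0
  · simp [modOp_coe_coe, hyz]
  · rw [modOp_coe_coe e y, if_neg hyz, modOp_coe_coe]
    simp only [hyz, false_or]

theorem modOp_assoc
    (hzero : ∀ σ τ ω : G,
      (e σ τ = 0 ∨ e (σ * τ) ω = 0) ↔ (e τ ω = 0 ∨ e σ (τ * ω) = 0))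
    (x y z : WithZero G) : modOp e (modOp e x y) z = modOp e x (modOp e y z) := by
  induction x using WithZero.recZeroCoe with
  | zero => simp
  | coe x =>
    induction y using WithZero.recZeroCoe with
    | zero => simp
    | coe y =>
      induction z using WithZero.recZeroCoe with
      | zero => simp
      | coe z => simp only [modOp_modOp_coe, modOp_coe_modOp, hzero, mul_assoc]

theorem modOp_one_left (hleft : ∀ σ : G, e 1 σ ≠ 0) (x : WithZero G) :
    modOp e ((1 : G) : WithZero G) x = x := by
  induction x using WithZero.recZeroCoe with
  | zero => simp
  | coe x => rw [modOp_coe_coe, if_neg (hleft x), one_mul]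

theorem modOp_one_right (hright : ∀ σ : G, e σ 1 ≠ 0) (x : WithZero G) :
    modOp e x ((1 : G) : WithZero G) = x := by
  induction x using WithZero.recZeroCoe with
  | zero => simp
  | coe x => rw [modOp_coe_coe, if_neg (hright x), mul_one]

end

theorem modification_of_idempotent_weak_cocycle_general {G : Type*} [Group G]
    {K : Type*} [Field K] [MulSemiringAction G K]
    (e : G → G → K)
    (hcoc : ∀ σ τ ω : G, σ • e τ ω * e σ (τ * ω) = e σ τ * e (σ * τ) ω)
    (hleft : ∀ σ : G, e 1 σ = 1) (hright : ∀ σ : G, e σ 1 = 1) :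
    (∀ x y z : WithZero G, modOp (K := K) e (modOp (K := K) e x y) z =
        modOp (K := K) e x (modOp (K := K) e y z)) ∧
      (∀ x : WithZero G, modOp (K := K) e ((1 : G) : WithZero G) x = x ∧
        modOp (K := K) e x ((1 : G) : WithZero G) = x) :=
  ⟨modOp_assoc e (cocycle_zero_iff hcoc),
    fun x => ⟨modOp_one_left e (fun σ => by simp [hleft]) x,
      modOp_one_right e (fun σ => by simp [hright]) x⟩⟩

/-- Let `G` be the Galois group of a field extension, acting
on the field `K` by automorphisms, and let `e : G × G → {0,1} ⊆ K` be a weak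
2-cocycle taking only the values `0` and `1`.  Then the operation
`x ∘ y = xy` if `e(x,y) = 1`, `x ∘ y = 0` if `e(x,y) = 0` (with
`x ∘ 0 = 0 ∘ x = 0`) makes `G ∪ {0}` into a monoid: `∘` is associative with
identity `1`. -/
theorem modification_of_idempotent_weak_cocycle {G : Type*} [Group G]
    {K : Type*} [Field K] [MulSemiringAction G K]
    (e : G → G → K)
    (hval : ∀ σ τ : G, e σ τ = 0 ∨ e σ τ = 1)
    (hcoc : ∀ σ τ ω : G, σ • e τ ω * e σ (τ * ω) = e σ τ * e (σ * τ) ω)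
    (hleft : ∀ σ : G, e 1 σ = 1) (hright : ∀ σ : G, e σ 1 = 1) :
    (∀ x y z : WithZero G, modOp (K := K) e (modOp (K := K) e x y) z =
        modOp (K := K) e x (modOp (K := K) e y z)) ∧
      (∀ x : WithZero G, modOp (K := K) e ((1 : G) : WithZero G) x = x ∧
        modOp (K := K) e x ((1 : G) : WithZero G) = x) :=
  modification_of_idempotent_weak_cocycle_general e hcoc hleft hright
end

section
/- Let G(∘) be a modification of a finite group G, and let U be the set of invertible elements of the monoid G(∘). Then N = (G⁰ ∖ U) is a two-sided ideal of G(∘), and every element of N is nilpotent: for each a ∈ N there is n ≥ 1 with a^{∘n} = 0 (the n-fold ∘-power of a equals 0). -/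
/-- `op` is a modification of the group `G`. -/
structure IsModification {G : Type*} [Group G]
    (op : WithZero G → WithZero G → WithZero G) : Prop where
  assoc : ∀ x y z : WithZero G, op (op x y) z = op x (op y z)
  one_op : ∀ x : WithZero G, op ((1 : G) : WithZero G) x = x
  op_one : ∀ x : WithZero G, op x ((1 : G) : WithZero G) = x
  zero_op : ∀ x : WithZero G, op 0 x = 0
  op_zero : ∀ x : WithZero G, op x 0 = 0
  mem : ∀ x y : G, op x y = ((x * y : G) : WithZero G) ∨ op x y = 0

/-- The `n`-fold `∘`-power of an element (with `a^{∘0} = 1`). -/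
def opPow {G : Type*} [Group G] (op : WithZero G → WithZero G → WithZero G)
    (a : WithZero G) : ℕ → WithZero G
  | 0 => ((1 : G) : WithZero G)
  | n + 1 => op a (opPow op a n)

/-- The set of invertible elements of the monoid `G(∘)`. -/
def unitsOf {G : Type*} [Group G] (op : WithZero G → WithZero G → WithZero G) :
    Set (WithZero G) :=
  {a | ∃ b : WithZero G, op a b = ((1 : G) : WithZero G) ∧
    op b a = ((1 : G) : WithZero G)}

section
variable {G : Type*} [Group G] (op : WithZero G → WithZero G → WithZero G)

lemma aux_ne_zero (hop : IsModification op) {a b : WithZero G}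
    (h : op b a = ((1 : G) : WithZero G)) : a ≠ 0 ∧ b ≠ 0 := by
  constructor
  · rintro rfl; rw [hop.op_zero] at h; exact WithZero.zero_ne_coe h
  · rintro rfl; rw [hop.zero_op] at h; exact WithZero.zero_ne_coe h

lemma aux_left_inv (hop : IsModification op) {a b : WithZero G}
    (h : op b a = ((1 : G) : WithZero G)) : a ∈ unitsOf op := by
  obtain ⟨ha, hb⟩ := aux_ne_zero op hop h
  obtain ⟨g, rfl⟩ := WithZero.ne_zero_iff_exists.mp ha
  obtain ⟨k, rfl⟩ := WithZero.ne_zero_iff_exists.mp hb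
  rcases hop.mem k g with hm | hm
  · rw [h] at hm
    have hkg : k * g = 1 := by exact_mod_cast hm.symm
    have hgk : g * k = 1 := by
      rw [eq_inv_of_mul_eq_one_left hkg, mul_inv_cancel]
    rcases hop.mem g k with hm2 | hm2
    · exact ⟨k, by rw [hm2, hgk], h⟩
    · exfalso
      have : (k : WithZero G) = 0 := by
        calc (k : WithZero G) = op ((1 : G) : WithZero G) k := (hop.one_op _).symm
        _ = op (op k g) k := by rw [h]
        _ = op k (op g k) := hop.assoc _ _ _
        _ = 0 := by rw [hm2, hop.op_zero]
      exact WithZero.coe_ne_zero this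
  · rw [h] at hm; exact absurd hm WithZero.coe_ne_zero

lemma aux_right_inv (hop : IsModification op) {a b : WithZero G}
    (h : op a b = ((1 : G) : WithZero G)) : a ∈ unitsOf op := by
  obtain ⟨hb, ha⟩ := aux_ne_zero op hop h
  obtain ⟨g, rfl⟩ := WithZero.ne_zero_iff_exists.mp ha
  obtain ⟨k, rfl⟩ := WithZero.ne_zero_iff_exists.mp hb
  rcases hop.mem g k with hm | hm
  · rw [h] at hm
    have hgk : g * k = 1 := by exact_mod_cast hm.symm
    have hkg : k * g = 1 := by
      rw [eq_inv_of_mul_eq_one_right hgk, inv_mul_cancel]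
    rcases hop.mem k g with hm2 | hm2
    · exact ⟨k, h, by rw [hm2, hkg]⟩
    · exfalso
      have : (k : WithZero G) = 0 := by
        calc (k : WithZero G) = op k ((1 : G) : WithZero G) := (hop.op_one _).symm
        _ = op k (op g k) := by rw [h]
        _ = op (op k g) k := (hop.assoc _ _ _).symm
        _ = 0 := by rw [hm2, hop.zero_op]
      exact WithZero.coe_ne_zero this
  · rw [h] at hm; exact absurd hm WithZero.coe_ne_zero

end

/-- For a modification `G(∘)` of a finite group `G`, the set
`N = G⁰ ∖ U` of non-invertible elements is a two-sided ideal, and every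
element of `N` is nilpotent: `a^{∘n} = 0` for some `n ≥ 1`. -/
theorem modification_noninvertible_ideal_nilpotent {G : Type*} [Group G] [Finite G]
    (op : WithZero G → WithZero G → WithZero G) (hop : IsModification op) :
    (∀ a ∈ (unitsOf op)ᶜ, ∀ s : WithZero G,
        op s a ∈ (unitsOf op)ᶜ ∧ op a s ∈ (unitsOf op)ᶜ) ∧
      (∀ a ∈ (unitsOf op)ᶜ, ∃ n : ℕ, 1 ≤ n ∧ opPow op a n = 0) := by
  constructor
  · intro a ha s
    constructor
    · intro hmem
      obtain ⟨c, _, h2⟩ := hmem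
      rw [← hop.assoc] at h2
      exact ha (aux_left_inv op hop h2)
    · intro hmem
      obtain ⟨c, h1, _⟩ := hmem
      rw [hop.assoc] at h1
      exact ha (aux_right_inv op hop h1)
  · intro a ha
    rcases eq_or_ne a 0 with rfl | h0
    · exact ⟨1, le_refl _, by rw [opPow, hop.zero_op]⟩
    · obtain ⟨g, rfl⟩ := WithZero.ne_zero_iff_exists.mp h0
      by_contra hc
      push_neg at hc
      have key : ∀ n, opPow op (g : WithZero G) n = ((g ^ n : G) : WithZero G) := by
        intro n
        induction n with
        | zero => simp [opPow]
        | succ n ih =>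
          have hne : opPow op (g : WithZero G) (n + 1) ≠ 0 := hc (n + 1) (by omega)
          rw [opPow, ih] at hne ⊢
          rcases hop.mem g (g ^ n) with hm | hm
          · rw [hm, ← pow_succ']
          · exact absurd hm hne
      have hk := key (orderOf g)
      have hord : 1 ≤ orderOf g := orderOf_pos g
      rw [pow_orderOf_eq_one] at hk
      obtain ⟨m, hm⟩ : ∃ m, orderOf g = m + 1 := ⟨orderOf g - 1, by omega⟩
      rw [hm, opPow] at hk
      exact ha (aux_right_inv op hop hk)
end
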